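/- For any MACs W : X1 × X2 → Y and W' : X1' × X2' → Y' on finite alphabets and positive integers k1, k2, k1', k2', the non-signaling assisted success probability is supermultiplicative under tensor products: S^NS(W ⊗ W', k1 k1', k2 k2') ≥ S^NS(W,k1,k2) · S^NS(W',k1',k2'). -/
import Mathlib


open Finset

/-- A tripartite non-signaling box `P(x1,x2,(j1,j2)|i1,i2,y)` between the two senders
and the receiver, with `k1` and `k2` messages.  Arguments of `P` are in the order
`x1 x2 j1 j2 i1 i2 y`. -/
def IsNSBox {X1 X2 Y : Type*} [Fintype X1] [Fintype X2] [Fintype Y] (k1 k2 : ℕ)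
    (P : X1 → X2 → Fin k1 → Fin k2 → Fin k1 → Fin k2 → Y → ℝ) : Prop :=
  (∀ x1 x2 j1 j2 i1 i2 y, 0 ≤ P x1 x2 j1 j2 i1 i2 y) ∧
  (∀ i1 i2 y, ∑ x1, ∑ x2, ∑ j1, ∑ j2, P x1 x2 j1 j2 i1 i2 y = 1) ∧
  (∀ x2 j1 j2 i1 i1' i2 y,
    ∑ x1, P x1 x2 j1 j2 i1 i2 y = ∑ x1, P x1 x2 j1 j2 i1' i2 y) ∧
  (∀ x1 j1 j2 i1 i2 i2' y,
    ∑ x2, P x1 x2 j1 j2 i1 i2 y = ∑ x2, P x1 x2 j1 j2 i1 i2' y) ∧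
  (∀ x1 x2 i1 i2 y y',
    ∑ j1, ∑ j2, P x1 x2 j1 j2 i1 i2 y = ∑ j1, ∑ j2, P x1 x2 j1 j2 i1 i2 y')

/-- `S^{NS}(W,k1,k2)`: maximum joint success probability with (tripartite)
non-signaling assistance between both senders and the receiver. -/
noncomputable def SNS {X1 X2 Y : Type*} [Fintype X1] [Fintype X2] [Fintype Y]
    (W : X1 → X2 → Y → ℝ) (k1 k2 : ℕ) : ℝ :=
  sSup {s : ℝ | ∃ P : X1 → X2 → Fin k1 → Fin k2 → Fin k1 → Fin k2 → Y → ℝ,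
    IsNSBox k1 k2 P ∧
    s = (1 / ((k1 : ℝ) * (k2 : ℝ))) * ∑ i1, ∑ i2, ∑ x1, ∑ x2, ∑ y,
      W x1 x2 y * P x1 x2 i1 i2 i1 i2 y}

/-- The tensor product of two multiple-access channels. -/
def macTensor {X1 X2 Y X1' X2' Y' : Type*}
    (W : X1 → X2 → Y → ℝ) (W' : X1' → X2' → Y' → ℝ) :
    (X1 × X1') → (X2 × X2') → (Y × Y') → ℝ :=
  fun x1 x2 y => W x1.1 x2.1 y.1 * W' x1.2 x2.2 y.2

private lemma value_nonneg {X1 X2 Y : Type*} [Fintype X1] [Fintype X2] [Fintype Y]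
    (W : X1 → X2 → Y → ℝ) (hW0 : ∀ x1 x2 y, 0 ≤ W x1 x2 y) {k1 k2 : ℕ}
    (P : X1 → X2 → Fin k1 → Fin k2 → Fin k1 → Fin k2 → Y → ℝ) (hP : IsNSBox k1 k2 P) :
    0 ≤ (1 / ((k1 : ℝ) * (k2 : ℝ))) * ∑ i1, ∑ i2, ∑ x1, ∑ x2, ∑ y,
      W x1 x2 y * P x1 x2 i1 i2 i1 i2 y := by
  apply mul_nonneg (by positivity)
  refine Finset.sum_nonneg fun _ _ => Finset.sum_nonneg fun _ _ => Finset.sum_nonneg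
    fun _ _ => Finset.sum_nonneg fun _ _ => Finset.sum_nonneg fun _ _ =>
      mul_nonneg (hW0 _ _ _) (hP.1 _ _ _ _ _ _ _)

private lemma value_le_one {X1 X2 Y : Type*} [Fintype X1] [Fintype X2] [Fintype Y]
    (W : X1 → X2 → Y → ℝ) (hW0 : ∀ x1 x2 y, 0 ≤ W x1 x2 y)
    (hW1 : ∀ x1 x2, ∑ y, W x1 x2 y = 1) {k1 k2 : ℕ} (hk1 : 0 < k1) (hk2 : 0 < k2)
    (P : X1 → X2 → Fin k1 → Fin k2 → Fin k1 → Fin k2 → Y → ℝ) (hP : IsNSBox k1 k2 P) :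
    (1 / ((k1 : ℝ) * (k2 : ℝ))) * ∑ i1, ∑ i2, ∑ x1, ∑ x2, ∑ y,
      W x1 x2 y * P x1 x2 i1 i2 i1 i2 y ≤ 1 := by
  obtain ⟨hpos, hnorm, -, -, hy⟩ := hP
  have hc : (0:ℝ) < (k1:ℝ) * (k2:ℝ) := by
    have h1 : (0:ℝ) < k1 := by exact_mod_cast hk1
    have h2 : (0:ℝ) < k2 := by exact_mod_cast hk2
    exact mul_pos h1 h2
  rcases isEmpty_or_nonempty Y with hY | hY
  · simp only [Finset.univ_eq_empty, Finset.sum_empty, Finset.sum_const_zero, mul_zero]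
    norm_num
  · inhabit Y
    have key : ∀ i1 i2, (∑ x1, ∑ x2, ∑ y, W x1 x2 y * P x1 x2 i1 i2 i1 i2 y) ≤ 1 := by
      intro i1 i2
      have step1 : ∀ x1 x2, (∑ y, W x1 x2 y * P x1 x2 i1 i2 i1 i2 y)
          ≤ ∑ y, W x1 x2 y * (∑ j1, ∑ j2, P x1 x2 j1 j2 i1 i2 y) := by
        intro x1 x2
        refine Finset.sum_le_sum fun y _ => mul_le_mul_of_nonneg_left ?_ (hW0 _ _ _)
        calc P x1 x2 i1 i2 i1 i2 y
            ≤ ∑ j2, P x1 x2 i1 j2 i1 i2 y :=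
              Finset.single_le_sum (f := fun j2 => P x1 x2 i1 j2 i1 i2 y) (fun j _ => hpos _ _ _ _ _ _ _) (Finset.mem_univ i2)
          _ ≤ ∑ j1, ∑ j2, P x1 x2 j1 j2 i1 i2 y :=
              Finset.single_le_sum (f := fun j1 => ∑ j2, P x1 x2 j1 j2 i1 i2 y)
                (fun j _ => Finset.sum_nonneg fun j' _ => hpos _ _ _ _ _ _ _)
                (Finset.mem_univ i1)
      have step2 : ∀ x1 x2, (∑ y, W x1 x2 y * (∑ j1, ∑ j2, P x1 x2 j1 j2 i1 i2 y))
          = ∑ j1, ∑ j2, P x1 x2 j1 j2 i1 i2 default := by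
        intro x1 x2
        calc ∑ y, W x1 x2 y * (∑ j1, ∑ j2, P x1 x2 j1 j2 i1 i2 y)
            = ∑ y, W x1 x2 y * (∑ j1, ∑ j2, P x1 x2 j1 j2 i1 i2 default) :=
              Finset.sum_congr rfl fun y _ => by rw [hy x1 x2 i1 i2 y default]
          _ = (∑ y, W x1 x2 y) * (∑ j1, ∑ j2, P x1 x2 j1 j2 i1 i2 default) := by
              rw [← Finset.sum_mul]
          _ = _ := by rw [hW1, one_mul]
      calc ∑ x1, ∑ x2, ∑ y, W x1 x2 y * P x1 x2 i1 i2 i1 i2 y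
          ≤ ∑ x1, ∑ x2, ∑ y, W x1 x2 y * (∑ j1, ∑ j2, P x1 x2 j1 j2 i1 i2 y) :=
            Finset.sum_le_sum fun x1 _ => Finset.sum_le_sum fun x2 _ => step1 x1 x2
        _ = ∑ x1, ∑ x2, ∑ j1, ∑ j2, P x1 x2 j1 j2 i1 i2 default :=
            Finset.sum_congr rfl fun x1 _ => Finset.sum_congr rfl fun x2 _ => step2 x1 x2
        _ = 1 := hnorm i1 i2 default
    have hsum : (∑ i1, ∑ i2, ∑ x1, ∑ x2, ∑ y, W x1 x2 y * P x1 x2 i1 i2 i1 i2 y)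
        ≤ (k1:ℝ) * (k2:ℝ) := by
      calc (∑ i1, ∑ i2, ∑ x1, ∑ x2, ∑ y, W x1 x2 y * P x1 x2 i1 i2 i1 i2 y)
          ≤ ∑ _i1 : Fin k1, ∑ _i2 : Fin k2, (1:ℝ) :=
            Finset.sum_le_sum fun i1 _ => Finset.sum_le_sum fun i2 _ => key i1 i2
        _ = (k1:ℝ) * (k2:ℝ) := by simp [Finset.sum_const, Finset.card_univ, mul_comm]
    rw [one_div_mul_eq_div]
    exact (div_le_one hc).2 hsum

private lemma mul_csSup_le {A B : Set ℝ} {c : ℝ} (hA : A.Nonempty) (hB : B.Nonempty)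
    (hA0 : ∀ a ∈ A, 0 ≤ a) (hB0 : ∀ b ∈ B, 0 ≤ b)
    (hBb : BddAbove B)
    (h : ∀ a ∈ A, ∀ b ∈ B, a * b ≤ c) : sSup A * sSup B ≤ c := by
  obtain ⟨a0, ha0⟩ := hA
  obtain ⟨b0, hb0⟩ := hB
  have hc : 0 ≤ c := le_trans (mul_nonneg (hA0 a0 ha0) (hB0 b0 hb0)) (h a0 ha0 b0 hb0)
  have hsB : 0 ≤ sSup B := le_trans (hB0 b0 hb0) (le_csSup hBb hb0)
  have key : ∀ a ∈ A, a * sSup B ≤ c := by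
    intro a ha
    rcases (hA0 a ha).eq_or_lt with h0 | h0
    · rw [← h0, zero_mul]; exact hc
    · rw [mul_comm, ← le_div_iff₀ h0]
      exact csSup_le ⟨b0, hb0⟩ fun b hb => (le_div_iff₀ h0).2 (by rw [mul_comm]; exact h a ha b hb)
  rcases hsB.eq_or_lt with h0 | h0
  · rw [← h0, mul_zero]; exact hc
  · rw [← le_div_iff₀ h0]
    exact csSup_le ⟨a0, ha0⟩ fun a ha => (le_div_iff₀ h0).2 (key a ha)



private lemma factor1 {U V : Type*} [Fintype U] [Fintype V] (F : U → ℝ) (G : V → ℝ) :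
    ∑ p : U × V, F p.1 * G p.2 = (∑ u, F u) * (∑ v, G v) := by
  simp only [Fintype.sum_prod_type]
  rw [Finset.sum_mul_sum]

private lemma factor2 {A A' B B' : Type*} [Fintype A] [Fintype A'] [Fintype B] [Fintype B']
    (f : A → B → ℝ) (g : A' → B' → ℝ) :
    ∑ a : A × A', ∑ b : B × B', f a.1 b.1 * g a.2 b.2
      = (∑ a, ∑ b, f a b) * (∑ a, ∑ b, g a b) := by
  calc ∑ a : A × A', ∑ b : B × B', f a.1 b.1 * g a.2 b.2
      = ∑ a : A × A', (∑ b, f a.1 b) * (∑ b, g a.2 b) :=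
        Finset.sum_congr rfl fun a _ => factor1 _ _
    _ = _ := factor1 (fun a => ∑ b, f a b) (fun a => ∑ b, g a b)

private lemma factor3 {A A' B B' C C' : Type*}
    [Fintype A] [Fintype A'] [Fintype B] [Fintype B'] [Fintype C] [Fintype C']
    (f : A → B → C → ℝ) (g : A' → B' → C' → ℝ) :
    ∑ a : A × A', ∑ b : B × B', ∑ c : C × C', f a.1 b.1 c.1 * g a.2 b.2 c.2
      = (∑ a, ∑ b, ∑ c, f a b c) * (∑ a, ∑ b, ∑ c, g a b c) := by
  calc ∑ a : A × A', ∑ b : B × B', ∑ c : C × C', f a.1 b.1 c.1 * g a.2 b.2 c.2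
      = ∑ a : A × A', (∑ b, ∑ c, f a.1 b c) * (∑ b, ∑ c, g a.2 b c) :=
        Finset.sum_congr rfl fun a _ => factor2 _ _
    _ = _ := factor1 (fun a => ∑ b, ∑ c, f a b c) (fun a => ∑ b, ∑ c, g a b c)

private lemma factor4 {A A' B B' C C' D D' : Type*}
    [Fintype A] [Fintype A'] [Fintype B] [Fintype B'] [Fintype C] [Fintype C']
    [Fintype D] [Fintype D']
    (f : A → B → C → D → ℝ) (g : A' → B' → C' → D' → ℝ) :
    ∑ a : A × A', ∑ b : B × B', ∑ c : C × C', ∑ d : D × D',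
      f a.1 b.1 c.1 d.1 * g a.2 b.2 c.2 d.2
      = (∑ a, ∑ b, ∑ c, ∑ d, f a b c d) * (∑ a, ∑ b, ∑ c, ∑ d, g a b c d) := by
  calc ∑ a : A × A', ∑ b : B × B', ∑ c : C × C', ∑ d : D × D',
      f a.1 b.1 c.1 d.1 * g a.2 b.2 c.2 d.2
      = ∑ a : A × A', (∑ b, ∑ c, ∑ d, f a.1 b c d) * (∑ b, ∑ c, ∑ d, g a.2 b c d) :=
        Finset.sum_congr rfl fun a _ => factor3 _ _
    _ = _ := factor1 (fun a => ∑ b, ∑ c, ∑ d, f a b c d) (fun a => ∑ b, ∑ c, ∑ d, g a b c d)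

private lemma factor5 {A A' B B' C C' D D' E E' : Type*}
    [Fintype A] [Fintype A'] [Fintype B] [Fintype B'] [Fintype C] [Fintype C']
    [Fintype D] [Fintype D'] [Fintype E] [Fintype E']
    (f : A → B → C → D → E → ℝ) (g : A' → B' → C' → D' → E' → ℝ) :
    ∑ a : A × A', ∑ b : B × B', ∑ c : C × C', ∑ d : D × D', ∑ e : E × E',
      f a.1 b.1 c.1 d.1 e.1 * g a.2 b.2 c.2 d.2 e.2
      = (∑ a, ∑ b, ∑ c, ∑ d, ∑ e, f a b c d e)
        * (∑ a, ∑ b, ∑ c, ∑ d, ∑ e, g a b c d e) := by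
  calc ∑ a : A × A', ∑ b : B × B', ∑ c : C × C', ∑ d : D × D', ∑ e : E × E',
      f a.1 b.1 c.1 d.1 e.1 * g a.2 b.2 c.2 d.2 e.2
      = ∑ a : A × A', (∑ b, ∑ c, ∑ d, ∑ e, f a.1 b c d e)
          * (∑ b, ∑ c, ∑ d, ∑ e, g a.2 b c d e) :=
        Finset.sum_congr rfl fun a _ => factor4 _ _
    _ = _ := factor1 (fun a => ∑ b, ∑ c, ∑ d, ∑ e, f a b c d e)
          (fun a => ∑ b, ∑ c, ∑ d, ∑ e, g a b c d e)

/-- the product of two non-signaling boxes -/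
def tensorBox {X1 X2 Y X1' X2' Y' : Type*} {k1 k2 k1' k2' : ℕ}
    (P : X1 → X2 → Fin k1 → Fin k2 → Fin k1 → Fin k2 → Y → ℝ)
    (P' : X1' → X2' → Fin k1' → Fin k2' → Fin k1' → Fin k2' → Y' → ℝ) :
    (X1 × X1') → (X2 × X2') → Fin (k1 * k1') → Fin (k2 * k2') →
      Fin (k1 * k1') → Fin (k2 * k2') → (Y × Y') → ℝ :=
  fun x1 x2 J1 J2 I1 I2 y =>
    P x1.1 x2.1 (finProdFinEquiv.symm J1).1 (finProdFinEquiv.symm J2).1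
      (finProdFinEquiv.symm I1).1 (finProdFinEquiv.symm I2).1 y.1 *
    P' x1.2 x2.2 (finProdFinEquiv.symm J1).2 (finProdFinEquiv.symm J2).2
      (finProdFinEquiv.symm I1).2 (finProdFinEquiv.symm I2).2 y.2

section Tensor
variable {X1 X2 Y X1' X2' Y' : Type*}
  [Fintype X1] [Fintype X2] [Fintype Y] [Fintype X1'] [Fintype X2'] [Fintype Y']
  {k1 k2 k1' k2' : ℕ}
  {P : X1 → X2 → Fin k1 → Fin k2 → Fin k1 → Fin k2 → Y → ℝ}
  {P' : X1' → X2' → Fin k1' → Fin k2' → Fin k1' → Fin k2' → Y' → ℝ}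

private lemma isNSBox_tensorBox (hP : IsNSBox k1 k2 P) (hP' : IsNSBox k1' k2' P') :
    IsNSBox (k1 * k1') (k2 * k2') (tensorBox P P') := by
  refine ⟨?_, ?_, ?_, ?_, ?_⟩
  · intro x1 x2 j1 j2 i1 i2 y
    exact mul_nonneg (hP.1 _ _ _ _ _ _ _) (hP'.1 _ _ _ _ _ _ _)
  · intro I1 I2 y
    calc ∑ x1 : X1 × X1', ∑ x2 : X2 × X2', ∑ J1, ∑ J2, tensorBox P P' x1 x2 J1 J2 I1 I2 y
        = ∑ x1 : X1 × X1', ∑ x2 : X2 × X2', ∑ p : Fin k1 × Fin k1', ∑ q : Fin k2 × Fin k2',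
            P x1.1 x2.1 p.1 q.1 (finProdFinEquiv.symm I1).1 (finProdFinEquiv.symm I2).1 y.1 *
            P' x1.2 x2.2 p.2 q.2 (finProdFinEquiv.symm I1).2 (finProdFinEquiv.symm I2).2 y.2 := by
          refine Finset.sum_congr rfl fun x1 _ => Finset.sum_congr rfl fun x2 _ => ?_
          calc ∑ J1, ∑ J2, tensorBox P P' x1 x2 J1 J2 I1 I2 y
              = ∑ p : Fin k1 × Fin k1', ∑ J2,
                  tensorBox P P' x1 x2 (finProdFinEquiv p) J2 I1 I2 y :=
                (Equiv.sum_comp finProdFinEquiv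
                  (fun J1 => ∑ J2, tensorBox P P' x1 x2 J1 J2 I1 I2 y)).symm
            _ = ∑ p : Fin k1 × Fin k1', ∑ q : Fin k2 × Fin k2',
                  tensorBox P P' x1 x2 (finProdFinEquiv p) (finProdFinEquiv q) I1 I2 y :=
                Finset.sum_congr rfl fun p _ => (Equiv.sum_comp finProdFinEquiv
                  (fun J2 => tensorBox P P' x1 x2 (finProdFinEquiv p) J2 I1 I2 y)).symm
            _ = _ := by simp [tensorBox]
      _ = (∑ a, ∑ b, ∑ c, ∑ d,
              P a b c d (finProdFinEquiv.symm I1).1 (finProdFinEquiv.symm I2).1 y.1)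
          * (∑ a, ∑ b, ∑ c, ∑ d,
              P' a b c d (finProdFinEquiv.symm I1).2 (finProdFinEquiv.symm I2).2 y.2) :=
          factor4 (fun a b c d =>
              P a b c d (finProdFinEquiv.symm I1).1 (finProdFinEquiv.symm I2).1 y.1)
            (fun a b c d =>
              P' a b c d (finProdFinEquiv.symm I1).2 (finProdFinEquiv.symm I2).2 y.2)
      _ = 1 := by rw [hP.2.1, hP'.2.1, one_mul]
  · intro x2 J1 J2 I1 I1' I2 y
    calc ∑ x1 : X1 × X1', tensorBox P P' x1 x2 J1 J2 I1 I2 y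
        = (∑ a, P a x2.1 (finProdFinEquiv.symm J1).1 (finProdFinEquiv.symm J2).1
              (finProdFinEquiv.symm I1).1 (finProdFinEquiv.symm I2).1 y.1)
          * (∑ a, P' a x2.2 (finProdFinEquiv.symm J1).2 (finProdFinEquiv.symm J2).2
              (finProdFinEquiv.symm I1).2 (finProdFinEquiv.symm I2).2 y.2) :=
          factor1 (fun a => P a x2.1 (finProdFinEquiv.symm J1).1 (finProdFinEquiv.symm J2).1
              (finProdFinEquiv.symm I1).1 (finProdFinEquiv.symm I2).1 y.1)
            (fun a => P' a x2.2 (finProdFinEquiv.symm J1).2 (finProdFinEquiv.symm J2).2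
              (finProdFinEquiv.symm I1).2 (finProdFinEquiv.symm I2).2 y.2)
      _ = (∑ a, P a x2.1 (finProdFinEquiv.symm J1).1 (finProdFinEquiv.symm J2).1
              (finProdFinEquiv.symm I1').1 (finProdFinEquiv.symm I2).1 y.1)
          * (∑ a, P' a x2.2 (finProdFinEquiv.symm J1).2 (finProdFinEquiv.symm J2).2
              (finProdFinEquiv.symm I1').2 (finProdFinEquiv.symm I2).2 y.2) := by
          rw [hP.2.2.1 x2.1 _ _ _ (finProdFinEquiv.symm I1').1,
            hP'.2.2.1 x2.2 _ _ _ (finProdFinEquiv.symm I1').2]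
      _ = ∑ x1 : X1 × X1', tensorBox P P' x1 x2 J1 J2 I1' I2 y :=
          (factor1 (fun a => P a x2.1 (finProdFinEquiv.symm J1).1 (finProdFinEquiv.symm J2).1
              (finProdFinEquiv.symm I1').1 (finProdFinEquiv.symm I2).1 y.1)
            (fun a => P' a x2.2 (finProdFinEquiv.symm J1).2 (finProdFinEquiv.symm J2).2
              (finProdFinEquiv.symm I1').2 (finProdFinEquiv.symm I2).2 y.2)).symm
  · intro x1 J1 J2 I1 I2 I2' y
    calc ∑ x2 : X2 × X2', tensorBox P P' x1 x2 J1 J2 I1 I2 y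
        = (∑ b, P x1.1 b (finProdFinEquiv.symm J1).1 (finProdFinEquiv.symm J2).1
              (finProdFinEquiv.symm I1).1 (finProdFinEquiv.symm I2).1 y.1)
          * (∑ b, P' x1.2 b (finProdFinEquiv.symm J1).2 (finProdFinEquiv.symm J2).2
              (finProdFinEquiv.symm I1).2 (finProdFinEquiv.symm I2).2 y.2) :=
          factor1 (fun b => P x1.1 b (finProdFinEquiv.symm J1).1 (finProdFinEquiv.symm J2).1
              (finProdFinEquiv.symm I1).1 (finProdFinEquiv.symm I2).1 y.1)
            (fun b => P' x1.2 b (finProdFinEquiv.symm J1).2 (finProdFinEquiv.symm J2).2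
              (finProdFinEquiv.symm I1).2 (finProdFinEquiv.symm I2).2 y.2)
      _ = (∑ b, P x1.1 b (finProdFinEquiv.symm J1).1 (finProdFinEquiv.symm J2).1
              (finProdFinEquiv.symm I1).1 (finProdFinEquiv.symm I2').1 y.1)
          * (∑ b, P' x1.2 b (finProdFinEquiv.symm J1).2 (finProdFinEquiv.symm J2).2
              (finProdFinEquiv.symm I1).2 (finProdFinEquiv.symm I2').2 y.2) := by
          rw [hP.2.2.2.1 x1.1 _ _ _ _ (finProdFinEquiv.symm I2').1,
            hP'.2.2.2.1 x1.2 _ _ _ _ (finProdFinEquiv.symm I2').2]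
      _ = ∑ x2 : X2 × X2', tensorBox P P' x1 x2 J1 J2 I1 I2' y :=
          (factor1 (fun b => P x1.1 b (finProdFinEquiv.symm J1).1 (finProdFinEquiv.symm J2).1
              (finProdFinEquiv.symm I1).1 (finProdFinEquiv.symm I2').1 y.1)
            (fun b => P' x1.2 b (finProdFinEquiv.symm J1).2 (finProdFinEquiv.symm J2).2
              (finProdFinEquiv.symm I1).2 (finProdFinEquiv.symm I2').2 y.2)).symm
  · intro x1 x2 I1 I2 y y'
    have conv : ∀ z : Y × Y', ∑ J1, ∑ J2, tensorBox P P' x1 x2 J1 J2 I1 I2 z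
        = (∑ c, ∑ d, P x1.1 x2.1 c d
              (finProdFinEquiv.symm I1).1 (finProdFinEquiv.symm I2).1 z.1)
          * (∑ c, ∑ d, P' x1.2 x2.2 c d
              (finProdFinEquiv.symm I1).2 (finProdFinEquiv.symm I2).2 z.2) := by
      intro z
      calc ∑ J1, ∑ J2, tensorBox P P' x1 x2 J1 J2 I1 I2 z
          = ∑ p : Fin k1 × Fin k1', ∑ J2,
              tensorBox P P' x1 x2 (finProdFinEquiv p) J2 I1 I2 z :=
            (Equiv.sum_comp finProdFinEquiv
              (fun J1 => ∑ J2, tensorBox P P' x1 x2 J1 J2 I1 I2 z)).symm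
        _ = ∑ p : Fin k1 × Fin k1', ∑ q : Fin k2 × Fin k2',
              tensorBox P P' x1 x2 (finProdFinEquiv p) (finProdFinEquiv q) I1 I2 z :=
            Finset.sum_congr rfl fun p _ => (Equiv.sum_comp finProdFinEquiv
              (fun J2 => tensorBox P P' x1 x2 (finProdFinEquiv p) J2 I1 I2 z)).symm
        _ = ∑ p : Fin k1 × Fin k1', ∑ q : Fin k2 × Fin k2',
              (P x1.1 x2.1 p.1 q.1
                (finProdFinEquiv.symm I1).1 (finProdFinEquiv.symm I2).1 z.1)
              * (P' x1.2 x2.2 p.2 q.2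
                (finProdFinEquiv.symm I1).2 (finProdFinEquiv.symm I2).2 z.2) := by
            simp [tensorBox]
        _ = _ := factor2 (fun c d => P x1.1 x2.1 c d
              (finProdFinEquiv.symm I1).1 (finProdFinEquiv.symm I2).1 z.1)
            (fun c d => P' x1.2 x2.2 c d
              (finProdFinEquiv.symm I1).2 (finProdFinEquiv.symm I2).2 z.2)
    rw [conv y, conv y',
      hP.2.2.2.2 x1.1 x2.1 (finProdFinEquiv.symm I1).1 (finProdFinEquiv.symm I2).1 y.1 y'.1,
      hP'.2.2.2.2 x1.2 x2.2 (finProdFinEquiv.symm I1).2 (finProdFinEquiv.symm I2).2 y.2 y'.2]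

private lemma tensorBox_value (W : X1 → X2 → Y → ℝ) (W' : X1' → X2' → Y' → ℝ)
    (hk1 : 0 < k1) (hk2 : 0 < k2) (hk1' : 0 < k1') (hk2' : 0 < k2') :
    ((1 / ((k1 : ℝ) * (k2 : ℝ))) * ∑ i1, ∑ i2, ∑ x1, ∑ x2, ∑ y,
        W x1 x2 y * P x1 x2 i1 i2 i1 i2 y)
    * ((1 / ((k1' : ℝ) * (k2' : ℝ))) * ∑ i1, ∑ i2, ∑ x1, ∑ x2, ∑ y,
        W' x1 x2 y * P' x1 x2 i1 i2 i1 i2 y)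
    = (1 / (((k1 * k1' : ℕ) : ℝ) * ((k2 * k2' : ℕ) : ℝ))) * ∑ I1, ∑ I2, ∑ x1, ∑ x2, ∑ y,
        macTensor W W' x1 x2 y * tensorBox P P' x1 x2 I1 I2 I1 I2 y := by
  have hsum : ∑ I1, ∑ I2, ∑ x1, ∑ x2, ∑ y,
      macTensor W W' x1 x2 y * tensorBox P P' x1 x2 I1 I2 I1 I2 y
      = (∑ i1, ∑ i2, ∑ x1, ∑ x2, ∑ y, W x1 x2 y * P x1 x2 i1 i2 i1 i2 y)
        * (∑ i1, ∑ i2, ∑ x1, ∑ x2, ∑ y, W' x1 x2 y * P' x1 x2 i1 i2 i1 i2 y) := by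
    calc ∑ I1, ∑ I2, ∑ x1, ∑ x2, ∑ y,
        macTensor W W' x1 x2 y * tensorBox P P' x1 x2 I1 I2 I1 I2 y
        = ∑ p : Fin k1 × Fin k1', ∑ I2, ∑ x1, ∑ x2, ∑ y,
            macTensor W W' x1 x2 y
            * tensorBox P P' x1 x2 (finProdFinEquiv p) I2 (finProdFinEquiv p) I2 y :=
          (Equiv.sum_comp finProdFinEquiv (fun I1 => ∑ I2, ∑ x1, ∑ x2, ∑ y,
            macTensor W W' x1 x2 y * tensorBox P P' x1 x2 I1 I2 I1 I2 y)).symm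
      _ = ∑ p : Fin k1 × Fin k1', ∑ q : Fin k2 × Fin k2', ∑ x1, ∑ x2, ∑ y,
            macTensor W W' x1 x2 y * tensorBox P P' x1 x2
              (finProdFinEquiv p) (finProdFinEquiv q) (finProdFinEquiv p) (finProdFinEquiv q) y :=
          Finset.sum_congr rfl fun p _ => (Equiv.sum_comp finProdFinEquiv
            (fun I2 => ∑ x1, ∑ x2, ∑ y, macTensor W W' x1 x2 y
              * tensorBox P P' x1 x2 (finProdFinEquiv p) I2 (finProdFinEquiv p) I2 y)).symm
      _ = ∑ p : Fin k1 × Fin k1', ∑ q : Fin k2 × Fin k2',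
            ∑ x1 : X1 × X1', ∑ x2 : X2 × X2', ∑ y : Y × Y',
            (W x1.1 x2.1 y.1 * P x1.1 x2.1 p.1 q.1 p.1 q.1 y.1)
            * (W' x1.2 x2.2 y.2 * P' x1.2 x2.2 p.2 q.2 p.2 q.2 y.2) := by
          refine Finset.sum_congr rfl fun p _ => Finset.sum_congr rfl fun q _ =>
            Finset.sum_congr rfl fun x1 _ => Finset.sum_congr rfl fun x2 _ =>
            Finset.sum_congr rfl fun y _ => ?_
          simp only [tensorBox, macTensor, Equiv.symm_apply_apply]
          ring
      _ = _ := factor5 (fun i1 i2 a b y => W a b y * P a b i1 i2 i1 i2 y)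
            (fun i1 i2 a b y => W' a b y * P' a b i1 i2 i1 i2 y)
  rw [hsum]
  have h1 : ((k1:ℝ)) ≠ 0 := by positivity
  have h2 : ((k2:ℝ)) ≠ 0 := by positivity
  have h1' : ((k1':ℝ)) ≠ 0 := by positivity
  have h2' : ((k2':ℝ)) ≠ 0 := by positivity
  push_cast
  ring
end Tensor

/-- Supermultiplicativity of the non-signaling assisted success probability:
`S^{NS}(W ⊗ W', k1 k1', k2 k2') ≥ S^{NS}(W,k1,k2) ⋅ S^{NS}(W',k1',k2')`. -/
theorem SNS_tensor_ge {X1 X2 Y X1' X2' Y' : Type*}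
    [Fintype X1] [Fintype X2] [Fintype Y] [Fintype X1'] [Fintype X2'] [Fintype Y']
    (W : X1 → X2 → Y → ℝ) (W' : X1' → X2' → Y' → ℝ)
    (hW0 : ∀ x1 x2 y, 0 ≤ W x1 x2 y)
    (hW1 : ∀ x1 x2, ∑ y, W x1 x2 y = 1)
    (hW'0 : ∀ x1 x2 y, 0 ≤ W' x1 x2 y)
    (hW'1 : ∀ x1 x2, ∑ y, W' x1 x2 y = 1)
    (k1 k2 k1' k2' : ℕ) (hk1 : 0 < k1) (hk2 : 0 < k2)
    (hk1' : 0 < k1') (hk2' : 0 < k2') :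
    SNS W k1 k2 * SNS W' k1' k2' ≤ SNS (macTensor W W') (k1 * k1') (k2 * k2') := by
  classical
  have hT0 : ∀ (x1 : X1 × X1') (x2 : X2 × X2') (y : Y × Y'), 0 ≤ macTensor W W' x1 x2 y :=
    fun x1 x2 y => mul_nonneg (hW0 _ _ _) (hW'0 _ _ _)
  have hT1 : ∀ (x1 : X1 × X1') (x2 : X2 × X2'), ∑ y, macTensor W W' x1 x2 y = 1 := by
    intro x1 x2
    calc ∑ y : Y × Y', macTensor W W' x1 x2 y
        = (∑ y, W x1.1 x2.1 y) * (∑ y, W' x1.2 x2.2 y) :=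
          factor1 (fun y => W x1.1 x2.1 y) (fun y => W' x1.2 x2.2 y)
      _ = 1 := by rw [hW1, hW'1, one_mul]
  unfold SNS
  set SA : Set ℝ := {s : ℝ | ∃ P : X1 → X2 → Fin k1 → Fin k2 → Fin k1 → Fin k2 → Y → ℝ,
    IsNSBox k1 k2 P ∧
    s = (1 / ((k1 : ℝ) * (k2 : ℝ))) * ∑ i1, ∑ i2, ∑ x1, ∑ x2, ∑ y,
      W x1 x2 y * P x1 x2 i1 i2 i1 i2 y} with hSA
  set SB : Set ℝ := {s : ℝ | ∃ P : X1' → X2' → Fin k1' → Fin k2' → Fin k1' → Fin k2' → Y' → ℝ,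
    IsNSBox k1' k2' P ∧
    s = (1 / ((k1' : ℝ) * (k2' : ℝ))) * ∑ i1, ∑ i2, ∑ x1, ∑ x2, ∑ y,
      W' x1 x2 y * P x1 x2 i1 i2 i1 i2 y} with hSB
  set SC : Set ℝ := {s : ℝ | ∃ P : (X1 × X1') → (X2 × X2') → Fin (k1 * k1') → Fin (k2 * k2') →
      Fin (k1 * k1') → Fin (k2 * k2') → (Y × Y') → ℝ,
    IsNSBox (k1 * k1') (k2 * k2') P ∧
    s = (1 / (((k1 * k1' : ℕ) : ℝ) * ((k2 * k2' : ℕ) : ℝ))) * ∑ i1, ∑ i2, ∑ x1, ∑ x2, ∑ y,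
      macTensor W W' x1 x2 y * P x1 x2 i1 i2 i1 i2 y} with hSC
  have hC0 : ∀ s ∈ SC, 0 ≤ s := by
    rintro s ⟨Q, hQ, rfl⟩
    exact value_nonneg _ hT0 Q hQ
  have hCb : BddAbove SC := by
    refine ⟨1, ?_⟩
    rintro s ⟨Q, hQ, rfl⟩
    exact value_le_one _ hT0 hT1 (Nat.mul_pos hk1 hk1') (Nat.mul_pos hk2 hk2') Q hQ
  have hCsup : 0 ≤ sSup SC := Real.sSup_nonneg hC0
  by_cases hA : SA.Nonempty
  · by_cases hB : SB.Nonempty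
    · refine mul_csSup_le hA hB ?_ ?_ ?_ ?_
      · rintro s ⟨P, hP, rfl⟩
        exact value_nonneg W hW0 P hP
      · rintro s ⟨P', hP', rfl⟩
        exact value_nonneg W' hW'0 P' hP'
      · refine ⟨1, ?_⟩
        rintro s ⟨P', hP', rfl⟩
        exact value_le_one W' hW'0 hW'1 hk1' hk2' P' hP'
      · rintro a ⟨P, hP, rfl⟩ b ⟨P', hP', rfl⟩
        refine le_trans (le_of_eq (tensorBox_value W W' hk1 hk2 hk1' hk2')) (le_csSup hCb ?_)
        exact ⟨tensorBox P P', isNSBox_tensorBox hP hP', rfl⟩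
    · rw [Set.not_nonempty_iff_eq_empty] at hB
      rw [hB, Real.sSup_empty, mul_zero]
      exact hCsup
  · rw [Set.not_nonempty_iff_eq_empty] at hA
    rw [hA, Real.sSup_empty, zero_mul]
    exact hCsup
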